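/- arXiv:2202.03915 — 4 statements merged into one kernel-verified Lean document; each statement's English description precedes it below -/
import Mathlib

section
/- (Sieve inequality.) Let q be a prime power, m a positive integer, β ∈ F_q, and let a, b, c ∈ F_{q^m} with a ≠ 0 and b² − 4ac ≠ 0. Let r be a divisor of q^m − 1 and let p₁, p₂, …, p_n be the distinct primes that divide q^m − 1 but do not divide r. Then M(q^m − 1, q^m − 1) ≥ Σ_{i=1}^{n} M(p_i r, r) + Σ_{i=1}^{n} M(r, p_i r) − (2n − 1)·M(r, r). -/
/-- An element `α` of a field is `r`-free if whenever `d ∣ r` and `α = γ^d`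
for some `γ`, then `d = 1`. -/
def IsRFree {F : Type*} [Field F] (r : ℕ) (α : F) : Prop :=
  ∀ d : ℕ, d ∣ r → (∃ γ : F, α = γ ^ d) → d = 1

/-- `M(r₁, r₂)`: the number of `α ∈ F_{q^m}^*` with `a·α² + b·α + c ≠ 0` such that
`α` is `r₁`-free, `a·α² + b·α + c` is `r₂`-free, and `Tr(α) = β`. -/
noncomputable def Mcount (K F : Type) [Field K] [Field F] [Algebra K F]
    (a b c : F) (β : K) (r₁ r₂ : ℕ) : ℕ :=
  Nat.card {α : F // α ≠ 0 ∧ a * α ^ 2 + b * α + c ≠ 0 ∧ IsRFree r₁ α ∧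
    IsRFree r₂ (a * α ^ 2 + b * α + c) ∧ Algebra.trace K F α = β}

/-!
An element is `N`-free exactly when it is not a `p`-th power for any prime `p ∣ N`. Hence, with
`N = q^m − 1`, an element that is `r`-free and `p r`-free for every prime `p ∣ N` with `p ∤ r` is
`N`-free, and likewise for `f(α)`. So if `S` is the set counted by `M(r, r)`, the set counted by
`M(N, N)` contains the intersection of the `2n` subsets of `S` counted by the `M(p r, r)` and
`M(r, p r)`, and the union bound on the complements gives the inequality.
-/

open Finset

namespace Finset

variable {α ι : Type*} [DecidableEq α]

theorem card_add_sum_card_le_card_add_card_mul {S T : Finset α} {I : Finset ι}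
    {A : ι → Finset α} (hA : ∀ i ∈ I, A i ⊆ S) (hT : ∀ x ∈ S, (∀ i ∈ I, x ∈ A i) → x ∈ T) :
    #S + ∑ i ∈ I, #(A i) ≤ #T + #I * #S := by
  have hcover : S \ T ⊆ I.biUnion fun i => S \ A i := by
    intro x hx
    obtain ⟨hxS, hxT⟩ := mem_sdiff.mp hx
    by_contra hx'
    simp only [mem_biUnion, mem_sdiff, not_exists, not_and, not_not] at hx'
    exact hxT (hT x hxS fun i hi => hx' i hi hxS)
  have hcompl : ∑ i ∈ I, #(S \ A i) + ∑ i ∈ I, #(A i) = #I * #S := by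
    rw [← sum_add_distrib, sum_congr rfl fun i hi => card_sdiff_add_card_eq_card (hA i hi),
      sum_const, smul_eq_mul]
  have hunion : #(S \ T) ≤ ∑ i ∈ I, #(S \ A i) :=
    (card_le_card hcover).trans card_biUnion_le
  have hsplit : #S ≤ #(S \ T) + #T := card_le_card_sdiff_add_card
  omega

end Finset

section RFree

variable {F : Type*} [Field F] {α : F}

theorem IsRFree.of_dvd {r₁ r₂ : ℕ} (h : r₁ ∣ r₂) (hα : IsRFree r₂ α) : IsRFree r₁ α :=
  fun d hd => hα d (hd.trans h)

theorem isRFree_iff_forall_prime {N : ℕ} :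
    IsRFree N α ↔ ∀ p : ℕ, p.Prime → p ∣ N → ¬ ∃ γ : F, α = γ ^ p := by
  refine ⟨fun h p hp hpN hpow => hp.one_lt.ne' (h p hpN hpow), fun h d hd ⟨γ, hγ⟩ => ?_⟩
  by_contra hd1
  have hmin : d.minFac ∣ d := d.minFac_dvd
  refine h d.minFac (Nat.minFac_prime hd1) (hmin.trans hd) ⟨γ ^ (d / d.minFac), ?_⟩
  rw [← pow_mul, Nat.div_mul_cancel hmin, hγ]

theorem IsRFree.of_mul_prime {N r : ℕ} (hr : IsRFree r α)
    (hpr : ∀ p : ℕ, p.Prime → p ∣ N → ¬ p ∣ r → IsRFree (p * r) α) : IsRFree N α := by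
  refine isRFree_iff_forall_prime.mpr fun p hp hpN => ?_
  by_cases hpdvd : p ∣ r
  · exact isRFree_iff_forall_prime.mp hr p hp hpdvd
  · exact isRFree_iff_forall_prime.mp (hpr p hp hpN hpdvd) p hp (dvd_mul_right p r)

end RFree

section Mcount

variable (K F : Type) [Field K] [Field F] [Fintype F] [Algebra K F] (a b c : F) (β : K)

open Classical in
noncomputable def Mcount.finset (r₁ r₂ : ℕ) : Finset F :=
  {α | α ≠ 0 ∧ a * α ^ 2 + b * α + c ≠ 0 ∧ IsRFree r₁ α ∧
    IsRFree r₂ (a * α ^ 2 + b * α + c) ∧ Algebra.trace K F α = β}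

variable {K F a b c β}

theorem Mcount.mem_finset {r₁ r₂ : ℕ} {α : F} :
    α ∈ Mcount.finset K F a b c β r₁ r₂ ↔ α ≠ 0 ∧ a * α ^ 2 + b * α + c ≠ 0 ∧ IsRFree r₁ α ∧
      IsRFree r₂ (a * α ^ 2 + b * α + c) ∧ Algebra.trace K F α = β := by
  simp [Mcount.finset]

theorem Mcount.eq_card_finset (r₁ r₂ : ℕ) :
    Mcount K F a b c β r₁ r₂ = #(Mcount.finset K F a b c β r₁ r₂) := by
  classical
  rw [Mcount, Nat.card_eq_fintype_card, Fintype.card_subtype, Mcount.finset]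

theorem Mcount.finset_mono {r₁ r₂ s₁ s₂ : ℕ} (h₁ : r₁ ∣ s₁) (h₂ : r₂ ∣ s₂) :
    Mcount.finset K F a b c β s₁ s₂ ⊆ Mcount.finset K F a b c β r₁ r₂ := by
  intro α hα
  obtain ⟨h0, hf, hα, hfα, htr⟩ := Mcount.mem_finset.mp hα
  exact Mcount.mem_finset.mpr ⟨h0, hf, hα.of_dvd h₁, hfα.of_dvd h₂, htr⟩

theorem Mcount.mem_finset_of_forall_prime {N r : ℕ} {α : F}
    (hα : α ∈ Mcount.finset K F a b c β r r)
    (hA : ∀ p : ℕ, p.Prime → p ∣ N → ¬ p ∣ r → α ∈ Mcount.finset K F a b c β (p * r) r)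
    (hB : ∀ p : ℕ, p.Prime → p ∣ N → ¬ p ∣ r → α ∈ Mcount.finset K F a b c β r (p * r)) :
    α ∈ Mcount.finset K F a b c β N N := by
  obtain ⟨h0, hf, hα, hfα, htr⟩ := Mcount.mem_finset.mp hα
  refine Mcount.mem_finset.mpr ⟨h0, hf, hα.of_mul_prime fun p hp hpN hpr => ?_,
    hfα.of_mul_prime fun p hp hpN hpr => ?_, htr⟩
  · exact (Mcount.mem_finset.mp (hA p hp hpN hpr)).2.2.1
  · exact (Mcount.mem_finset.mp (hB p hp hpN hpr)).2.2.2.1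

end Mcount

theorem Mcount_sieve_inequality_general
    (q m : ℕ)
    (K F : Type) [Field K] [Field F] [Fintype F] [Algebra K F]
    (β : K) (a b c : F)
    (r : ℕ)
    (P : Finset ℕ) (hP : ∀ x : ℕ, x ∈ P ↔ x.Prime ∧ x ∣ q ^ m - 1 ∧ ¬ x ∣ r) :
    (Mcount K F a b c β (q ^ m - 1) (q ^ m - 1) : ℝ) ≥
      (∑ p ∈ P, (Mcount K F a b c β (p * r) r : ℝ)) +
      (∑ p ∈ P, (Mcount K F a b c β r (p * r) : ℝ)) -
      (2 * (P.card : ℝ) - 1) * (Mcount K F a b c β r r : ℝ) := by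
  classical
  simp only [Mcount.eq_card_finset]
  have key := card_add_sum_card_le_card_add_card_mul (I := P.disjSum P)
    (A := Sum.elim (fun p => Mcount.finset K F a b c β (p * r) r)
      (fun p => Mcount.finset K F a b c β r (p * r)))
    (S := Mcount.finset K F a b c β r r) (T := Mcount.finset K F a b c β (q ^ m - 1) (q ^ m - 1))
    ?_ ?_
  · simp only [sum_disjSum, Sum.elim_inl, Sum.elim_inr, card_disjSum] at key
    have := (Nat.cast_le (α := ℝ)).mpr key
    push_cast at this
    linarith
  · rintro (p | p) -
    · exact Mcount.finset_mono (dvd_mul_left r p) dvd_rfl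
    · exact Mcount.finset_mono dvd_rfl (dvd_mul_left r p)
  · intro α hα hfree
    refine Mcount.mem_finset_of_forall_prime hα (fun p hp hpN hpr => ?_) fun p hp hpN hpr => ?_
    · exact hfree (.inl p) (inl_mem_disjSum.mpr ((hP p).mpr ⟨hp, hpN, hpr⟩))
    · exact hfree (.inr p) (inr_mem_disjSum.mpr ((hP p).mpr ⟨hp, hpN, hpr⟩))

/-- Sieve inequality: if `P` is the set of distinct primes dividing `q^m − 1` but not `r`,
with `n = |P|`, then
`M(q^m−1, q^m−1) ≥ Σ_{p ∈ P} M(p r, r) + Σ_{p ∈ P} M(r, p r) − (2n − 1)·M(r, r)`. -/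
theorem Mcount_sieve_inequality
    (q m : ℕ) (hq : IsPrimePow q) (hm : 0 < m)
    (K F : Type) [Field K] [Fintype K] [Field F] [Fintype F] [Algebra K F]
    (hcardK : Fintype.card K = q) (hcardF : Fintype.card F = q ^ m)
    (β : K) (a b c : F) (ha : a ≠ 0) (hdisc : b ^ 2 - 4 * a * c ≠ 0)
    (r : ℕ) (hr : r ∣ q ^ m - 1)
    (P : Finset ℕ) (hP : ∀ x : ℕ, x ∈ P ↔ x.Prime ∧ x ∣ q ^ m - 1 ∧ ¬ x ∣ r) :
    (Mcount K F a b c β (q ^ m - 1) (q ^ m - 1) : ℝ) ≥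
      (∑ p ∈ P, (Mcount K F a b c β (p * r) r : ℝ)) +
      (∑ p ∈ P, (Mcount K F a b c β r (p * r) : ℝ)) -
      (2 * (P.card : ℝ) - 1) * (Mcount K F a b c β r r : ℝ) :=
  Mcount_sieve_inequality_general q m K F β a b c r P hP
end

section
/- Let N be a positive integer with ω(N) ≥ 85. Then W(N) < N^{1/7}. -/
/-- `W n = 2^{ω(n)}` where `ω(n)` is the number of distinct prime divisors of `n`. -/
def W (n : ℕ) : ℕ := 2 ^ n.primeFactors.card

/-!
`N` is at least the product of its `k = ω(N)` distinct prime factors, hence at least the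
product of the first `k` primes. The first 85 primes are the primes below 440 and their product
exceeds `128 ^ 85`; every later prime exceeds `128`, so the product of the first `k` primes
exceeds `128 ^ k = W(N) ^ 7` for all `k ≥ 85`.
-/

open Finset

namespace Nat

theorem prod_range_count_nth {M : Type*} [CommMonoid M] (P : ℕ → Prop) [DecidablePred P]
    (f : ℕ → M) (n : ℕ) :
    ∏ i ∈ range (count P n), f (nth P i) = ∏ x ∈ range n with P x, f x := by
  induction n with
  | zero => simp
  | succ n ih =>
    by_cases h : P n
    · rw [count_succ, if_pos h, prod_range_succ, ih, nth_count h, range_add_one,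
        filter_insert, if_pos h, prod_insert (by simp), mul_comm]
    · rw [count_succ, if_neg h, add_zero, ih, range_add_one, filter_insert, if_neg h]

theorem prod_range_card_nth_le_prod {P : ℕ → Prop} (s : Finset ℕ) (hs : ∀ x ∈ s, P x) :
    ∏ i ∈ range #s, nth P i ≤ ∏ x ∈ s, x := by
  classical
  induction s using Finset.induction_on_max with
  | empty => simp
  | insert a s hlt ih =>
    have ha : a ∉ s := fun h => (hlt a h).false
    have hcount : #s < count P (a + 1) := by
      rw [count_eq_card_filter_range, Nat.lt_iff_add_one_le, ← card_insert_of_notMem ha]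
      refine card_le_card fun x hx => mem_filter.2 ⟨mem_range.2 ?_, hs x hx⟩
      rcases mem_insert.1 hx with rfl | hx
      exacts [lt_add_one x, (hlt x hx).trans (lt_add_one a)]
    rw [card_insert_of_notMem ha, prod_range_succ, prod_insert ha, mul_comm a]
    exact Nat.mul_le_mul (ih fun x hx => hs x (mem_insert_of_mem hx))
      (Nat.lt_add_one_iff.1 (nth_lt_of_lt_count hcount))

theorem pow_lt_prod_range_of_monotone {f : ℕ → ℕ} (hf : Monotone f) {a k₀ : ℕ}
    (ha₀ : 0 < a) (ha : a ≤ f k₀) (h₀ : a ^ k₀ < ∏ i ∈ range k₀, f i) {k : ℕ} (hk : k₀ ≤ k) :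
    a ^ k < ∏ i ∈ range k, f i := by
  induction k, hk using Nat.le_induction with
  | base => exact h₀
  | succ k hk ih =>
    have hak : a ≤ f k := ha.trans (hf hk)
    rw [pow_succ, prod_range_succ]
    exact Nat.mul_lt_mul_of_lt_of_le ih hak (ha₀.trans_le hak)

set_option maxRecDepth 100000 in
theorem count_prime_440 : count Nat.Prime 440 = 85 := by decide +kernel

theorem pow_lt_prod_range_nth_prime {k : ℕ} (hk : 85 ≤ k) :
    128 ^ k < ∏ i ∈ range k, nth Nat.Prime i := by
  have h₀ : 128 ^ 85 < ∏ i ∈ range 85, nth Nat.Prime i := by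
    have h := prod_range_count_nth Nat.Prime id 440
    rw [count_prime_440] at h
    simp only [id_eq] at h
    rw [h]
    decide +kernel
  have h128 : 128 ≤ nth Nat.Prime 85 :=
    count_prime_440 ▸ (le_nth_count infinite_setOfPred_prime 440).trans' (by norm_num)
  exact pow_lt_prod_range_of_monotone (nth_monotone infinite_setOfPred_prime)
    (by norm_num) h128 h₀ hk

end Nat

theorem W_lt_rpow_seventh_general (N : ℕ) (hω : 85 ≤ N.primeFactors.card) :
    (W N : ℝ) < (N : ℝ) ^ ((1 : ℝ) / 7) := by
  set k := #N.primeFactors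
  have hN : N ≠ 0 := by rintro rfl; simp [k] at hω
  have h : 128 ^ k < N :=
    calc 128 ^ k < ∏ i ∈ range k, Nat.nth Nat.Prime i := Nat.pow_lt_prod_range_nth_prime hω
      _ ≤ ∏ p ∈ N.primeFactors, p :=
        Nat.prod_range_card_nth_le_prod _ fun _ => Nat.prime_of_mem_primeFactors
      _ ≤ N := Nat.le_of_dvd (Nat.pos_of_ne_zero hN) (Nat.prod_primeFactors_dvd N)
  rw [one_div, Real.lt_rpow_inv_iff_of_pos (by positivity) (by positivity) (by norm_num)]
  have hW : W N ^ 7 = 128 ^ k := by rw [W, ← pow_mul, mul_comm, pow_mul]; rfl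
  exact_mod_cast hW ▸ h

/-- If `N` is a positive integer with at least 85 distinct prime factors,
then `W(N) < N^{1/7}`. -/
theorem W_lt_rpow_seventh (N : ℕ) (hN : 0 < N) (hω : 85 ≤ N.primeFactors.card) :
    (W N : ℝ) < (N : ℝ) ^ ((1 : ℝ) / 7) :=
  W_lt_rpow_seventh_general N hω
end

section
/- Let m be a positive integer such that 2^m − 1 is a Mersenne prime with 2^m − 1 > 13. Let a, b, c ∈ F_{2^m} with a ≠ 0 and b² − 4ac ≠ 0, and let β ∈ F_2 be arbitrary. Then there exists a primitive element α of F_{2^m} such that aα² + bα + c is also a primitive element of F_{2^m} and Tr_{F_{2^m}/F_2}(α) = β. -/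
/-!
Since `2 ^ m - 1` is prime, the multiplicative group of `F` has prime order, so every element
other than `0` and `1` is primitive. Hence `α` only has to avoid `0`, `1` and the at most four
roots of `a α² + b α + c = 0` and `a α² + b α + c = 1`, while the trace, being a surjective
additive map onto `𝔽₂`, takes the value `β` on `2 ^ (m - 1) ≥ 8` elements.
-/

open Finset Polynomial

theorem orderOf_eq_card_sub_one_of_prime {F : Type*} [Field F] [Fintype F]
    (hp : (Fintype.card F - 1).Prime) {x : F} (hx0 : x ≠ 0) (hx1 : x ≠ 1) :
    orderOf x = Fintype.card F - 1 := by
  classical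
  have hcard : Nat.card Fˣ = Fintype.card F - 1 := by
    rw [Nat.card_eq_fintype_card, Fintype.card_units]
  have : Fact (Nat.card Fˣ).Prime := ⟨hcard ▸ hp⟩
  have hu : Units.mk0 x hx0 ≠ 1 := by simpa [Units.ext_iff] using hx1
  rw [← Units.val_mk0 hx0, orderOf_units,
    orderOf_eq_card_of_zpowers_eq_top (zpowers_eq_top_of_prime_card rfl hu), hcard]

theorem card_mul_card_fiber_of_surjective {G H F : Type*} [AddGroup G] [Fintype G]
    [AddMonoid H] [Fintype H] [DecidableEq H] [FunLike F G H] [AddMonoidHomClass F G H]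
    (f : F) (hf : Function.Surjective f) (y : H) :
    Fintype.card H * #{g | f g = y} = Fintype.card G := by
  calc Fintype.card H * #{g | f g = y}
      = ∑ z : H, #{g | f g = z} := by
        rw [sum_congr rfl fun z _ => AddMonoidHom.card_fiber_eq_of_mem_range f (hf z) (hf y),
          sum_const, smul_eq_mul, card_univ]
    _ = Fintype.card G := (card_eq_sum_card_fiberwise fun g _ => mem_univ (f g)).symm

theorem card_mul_card_trace_fiber (K L : Type*) [Field K] [Fintype K] [Field L] [Fintype L]
    [Algebra K L] [DecidableEq K] (y : K) :
    Fintype.card K * #{x | Algebra.trace K L x = y} = Fintype.card L :=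
  card_mul_card_fiber_of_surjective _ (Algebra.trace_surjective K L) y

theorem card_filter_eval_eq_zero_le_natDegree {R : Type*} [CommRing R] [IsDomain R]
    [Fintype R] [DecidableEq R] {p : R[X]} (hp : p ≠ 0) :
    #{x | p.eval x = 0} ≤ p.natDegree :=
  card_le_degree_of_subset_roots fun x hx => by
    simpa [mem_roots hp] using (mem_filter.mp hx).2

theorem card_filter_quadratic_eq_le_two {R : Type*} [CommRing R] [IsDomain R] [Fintype R]
    [DecidableEq R] {a : R} (ha : a ≠ 0) (b c v : R) :
    #{x | a * x ^ 2 + b * x + c = v} ≤ 2 := by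
  set p : R[X] := C a * X ^ 2 + C b * X + C (c - v)
  have hdeg : p.natDegree = 2 := natDegree_quadratic ha
  calc #{x | a * x ^ 2 + b * x + c = v}
      = #{x | p.eval x = 0} := by
        congr 1; ext x; simp [p, ← add_sub_assoc, sub_eq_zero]
    _ ≤ 2 := hdeg ▸ card_filter_eval_eq_zero_le_natDegree
      (ne_zero_of_natDegree_gt (n := 0) (by omega))

theorem primitive_pair_with_trace_mersenne_general
    (m : ℕ) (hp : Nat.Prime (2 ^ m - 1)) (h13 : 13 < 2 ^ m - 1)
    (F : Type) [Field F] [Fintype F] [Algebra (ZMod 2) F]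
    (hcardF : Fintype.card F = 2 ^ m)
    (a b c : F) (ha : a ≠ 0) (β : ZMod 2) :
    ∃ α : F, orderOf α = 2 ^ m - 1 ∧
      orderOf (a * α ^ 2 + b * α + c) = 2 ^ m - 1 ∧
      Algebra.trace (ZMod 2) F α = β := by
  classical
  have hprim : ∀ x : F, x ≠ 0 → x ≠ 1 → orderOf x = 2 ^ m - 1 := fun x hx0 hx1 =>
    hcardF ▸ orderOf_eq_card_sub_one_of_prime (hcardF ▸ hp) hx0 hx1
  have hbad : #({0, 1} ∪ ({x | a * x ^ 2 + b * x + c = 0} : Finset F) ∪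
      ({x | a * x ^ 2 + b * x + c = 1} : Finset F)) ≤ 6 := by
    grw [card_union_le, card_union_le, card_le_two, card_filter_quadratic_eq_le_two ha,
      card_filter_quadratic_eq_le_two ha]
  have hfiber : 6 < #{x | Algebra.trace (ZMod 2) F x = β} := by
    have := card_mul_card_trace_fiber (ZMod 2) F β
    rw [ZMod.card, hcardF] at this
    omega
  obtain ⟨α, hαβ, hαgood⟩ := exists_mem_notMem_of_card_lt_card (hbad.trans_lt hfiber)
  simp only [mem_filter, mem_univ, true_and, mem_union, mem_insert, mem_singleton,
    not_or] at hαβ hαgood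
  obtain ⟨⟨⟨hα0, hα1⟩, hQ0⟩, hQ1⟩ := hαgood
  exact ⟨α, hprim α hα0 hα1, hprim _ hQ0 hQ1, hαβ⟩

/-- If `2^m − 1` is a Mersenne prime exceeding 13, then for any `a, b, c ∈ F_{2^m}` with
`a ≠ 0` and `b² − 4ac ≠ 0` and any `β ∈ F_2`, there exists a primitive element `α` of
`F_{2^m}` such that `a·α² + b·α + c` is also primitive and `Tr(α) = β`. -/
theorem primitive_pair_with_trace_mersenne
    (m : ℕ) (hm : 0 < m) (hp : Nat.Prime (2 ^ m - 1)) (h13 : 13 < 2 ^ m - 1)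
    (F : Type) [Field F] [Fintype F] [Algebra (ZMod 2) F]
    (hcardF : Fintype.card F = 2 ^ m)
    (a b c : F) (ha : a ≠ 0) (hdisc : b ^ 2 - 4 * a * c ≠ 0) (β : ZMod 2) :
    ∃ α : F, orderOf α = 2 ^ m - 1 ∧
      orderOf (a * α ^ 2 + b * α + c) = 2 ^ m - 1 ∧
      Algebra.trace (ZMod 2) F α = β :=
  primitive_pair_with_trace_mersenne_general m hp h13 F hcardF a b c ha β
end

section
/- Let q be a prime power, m a positive integer, and let a, b, c ∈ F_{q^m} with a ≠ 0 and b² − 4ac ≠ 0. Let m₁, m₂ be integers with 0 ≤ m₁, m₂ ≤ q^m − 2 and set F(x) = x^{m₁}(ax² + bx + c)^{m₂} ∈ F_{q^m}[x]. If F(x) = y·H(x)^{q^m − 1} for some y ∈ F_{q^m} and some polynomial H ∈ F_{q^m}[x], then m₁ = m₂ = 0. -/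
/-!
Over an algebraic closure, every root multiplicity of `y * H ^ n` is a multiple of `n`.
A quadratic with nonzero discriminant has only simple roots, and (having two distinct roots)
a nonzero one, where `X^m₁ * Q^m₂` has multiplicity `m₂`; at `0` its multiplicity is `m₁` plus
a multiple of `m₂`. So `n = q^m - 1` divides `m₁` and `m₂`, which are smaller than `n`.
-/

open Polynomial

section Quadratic

variable {K : Type*} [Field K] {a b c : K}

lemma eval_quadratic (t : K) :
    (C a * X ^ 2 + C b * X + C c).eval t = a * (t * t) + b * t + c := by
  simp only [eval_add, eval_mul, eval_pow, eval_C, eval_X]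
  ring

lemma quadratic_ne_zero (ha : a ≠ 0) : C a * X ^ 2 + C b * X + C c ≠ 0 :=
  leadingCoeff_ne_zero.mp (by rwa [leadingCoeff_quadratic ha])

lemma rootMultiplicity_quadratic_eq_one (ha : a ≠ 0) (hd : discrim a b c ≠ 0) {t : K}
    (ht : (C a * X ^ 2 + C b * X + C c).IsRoot t) :
    rootMultiplicity t (C a * X ^ 2 + C b * X + C c) = 1 := by
  have hQ := quadratic_ne_zero (b := b) (c := c) ha
  have hsq : discrim a b c = (2 * a * t + b) ^ 2 :=
    discrim_eq_sq_of_quadratic_eq_zero (by rwa [← eval_quadratic])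
  refine le_antisymm (not_lt.mp fun hlt => hd ?_) ((rootMultiplicity_pos hQ).mpr ht)
  have hder := ((one_lt_rootMultiplicity_iff_isRoot hQ).mp hlt).2
  simp only [IsRoot, derivative_add, derivative_mul, derivative_C, derivative_X_pow,
    derivative_X, eval_add, eval_mul, eval_C, eval_X, eval_pow, eval_zero, eval_one] at hder
  rw [hsq]
  linear_combination (2 * a * t + b) * hder

lemma exists_ne_zero_isRoot_quadratic [IsAlgClosed K] (ha : a ≠ 0) (hd : discrim a b c ≠ 0) :
    ∃ t ≠ 0, (C a * X ^ 2 + C b * X + C c).IsRoot t := by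
  obtain ⟨r, hr⟩ := IsAlgClosed.exists_root (C a * X ^ 2 + C b * X + C c)
    (by rw [degree_quadratic ha]; decide)
  rw [IsRoot, eval_quadratic] at hr
  rcases ne_or_eq r 0 with hr0 | rfl
  · exact ⟨r, hr0, by rwa [IsRoot, eval_quadratic]⟩
  · obtain rfl : c = 0 := by simpa using hr
    have hb : b ≠ 0 := by
      rintro rfl
      simp [discrim] at hd
    refine ⟨-b / a, div_ne_zero (neg_ne_zero.mpr hb) ha, ?_⟩
    rw [IsRoot, eval_quadratic]
    field_simp
    ring

end Quadratic

section RootMultiplicity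

variable {R : Type*} [CommRing R] [IsDomain R]

lemma dvd_rootMultiplicity_C_mul_pow {y : R} (hy : y ≠ 0) (H : R[X]) (n : ℕ) (t : R) :
    n ∣ rootMultiplicity t (C y * H ^ n) := by
  classical
  rw [← count_roots, roots_C_mul _ hy, roots_pow, Multiset.count_nsmul]
  exact dvd_mul_right n _

lemma rootMultiplicity_pow_mul_pow {P Q : R[X]} (hP : P ≠ 0) (hQ : Q ≠ 0) (i j : ℕ) (t : R) :
    rootMultiplicity t (P ^ i * Q ^ j) = i * rootMultiplicity t P + j * rootMultiplicity t Q := by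
  classical
  simp only [← count_roots, roots_mul (mul_ne_zero (pow_ne_zero i hP) (pow_ne_zero j hQ)),
    roots_pow, Multiset.count_add, Multiset.count_nsmul]

end RootMultiplicity

theorem dvd_of_X_pow_mul_quadratic_pow_eq_C_mul_pow_of_isAlgClosed {K : Type*} [Field K]
    [IsAlgClosed K] {a b c y : K} {H : K[X]} {n m₁ m₂ : ℕ} (ha : a ≠ 0)
    (hd : discrim a b c ≠ 0)
    (h : X ^ m₁ * (C a * X ^ 2 + C b * X + C c) ^ m₂ = C y * H ^ n) :
    n ∣ m₁ ∧ n ∣ m₂ := by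
  have hQ := quadratic_ne_zero (b := b) (c := c) ha
  have hy : y ≠ 0 := by
    rintro rfl
    simp [hQ] at h
  have hdvd (t : K) := rootMultiplicity_pow_mul_pow X_ne_zero hQ m₁ m₂ t ▸ h ▸
    dvd_rootMultiplicity_C_mul_pow hy H n t
  obtain ⟨t, ht0, ht⟩ := exists_ne_zero_isRoot_quadratic ha hd
  have h₂ : n ∣ m₂ := by
    simpa [rootMultiplicity_eq_zero (p := X) (by simpa using ht0),
      rootMultiplicity_quadratic_eq_one ha hd ht] using hdvd t
  have h₁ : n ∣ m₁ + m₂ * rootMultiplicity 0 (C a * X ^ 2 + C b * X + C c) := by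
    simpa [show rootMultiplicity 0 (X : K[X]) = 1 by
      simpa using rootMultiplicity_X_sub_C_self (x := (0 : K))] using hdvd 0
  exact ⟨(Nat.dvd_add_left (h₂.mul_right _)).mp h₁, h₂⟩

theorem dvd_of_X_pow_mul_quadratic_pow_eq_C_mul_pow {K : Type*} [Field K]
    {a b c y : K} {H : K[X]} {n m₁ m₂ : ℕ} (ha : a ≠ 0) (hd : discrim a b c ≠ 0)
    (h : X ^ m₁ * (C a * X ^ 2 + C b * X + C c) ^ m₂ = C y * H ^ n) :
    n ∣ m₁ ∧ n ∣ m₂ := by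
  let f := algebraMap K (AlgebraicClosure K)
  have hf := congrArg (map f) h
  simp only [Polynomial.map_mul, Polynomial.map_pow, Polynomial.map_add, map_X, map_C] at hf
  refine dvd_of_X_pow_mul_quadratic_pow_eq_C_mul_pow_of_isAlgClosed
    ((map_ne_zero f).mpr ha) ?_ hf
  simpa only [discrim, map_sub, map_mul, map_pow, map_ofNat] using (map_ne_zero f).mpr hd

lemma eq_zero_of_sub_one_dvd_of_le_sub_two {k m : ℕ} (hle : m ≤ k - 2) (hdvd : k - 1 ∣ m) :
    m = 0 := by
  rcases Nat.eq_zero_or_pos m with h0 | hpos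
  · exact h0
  · have := Nat.le_of_dvd hpos hdvd
    omega

theorem not_power_unless_trivial_general
    (q m : ℕ)
    (F : Type) [Field F]
    (a b c : F) (ha : a ≠ 0) (hdisc : b ^ 2 - 4 * a * c ≠ 0)
    (m₁ m₂ : ℕ) (hm₁ : m₁ ≤ q ^ m - 2) (hm₂ : m₂ ≤ q ^ m - 2)
    (y : F) (H : Polynomial F)
    (hF : (X : Polynomial F) ^ m₁ * (C a * X ^ 2 + C b * X + C c) ^ m₂ =
      C y * H ^ (q ^ m - 1)) :
    m₁ = 0 ∧ m₂ = 0 := by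
  obtain ⟨h₁, h₂⟩ := dvd_of_X_pow_mul_quadratic_pow_eq_C_mul_pow ha hdisc hF
  exact ⟨eq_zero_of_sub_one_dvd_of_le_sub_two hm₁ h₁, eq_zero_of_sub_one_dvd_of_le_sub_two hm₂ h₂⟩

/-- If `F(x) = x^{m₁}·(a x² + b x + c)^{m₂}` with `0 ≤ m₁, m₂ ≤ q^m − 2` equals
`y·H(x)^{q^m − 1}` for some `y ∈ F_{q^m}` and `H ∈ F_{q^m}[x]`, then `m₁ = m₂ = 0`. -/
theorem not_power_unless_trivial
    (q m : ℕ) (hq : IsPrimePow q) (hm : 0 < m)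
    (F : Type) [Field F] [Fintype F] (hcardF : Fintype.card F = q ^ m)
    (a b c : F) (ha : a ≠ 0) (hdisc : b ^ 2 - 4 * a * c ≠ 0)
    (m₁ m₂ : ℕ) (hm₁ : m₁ ≤ q ^ m - 2) (hm₂ : m₂ ≤ q ^ m - 2)
    (y : F) (H : Polynomial F)
    (hF : (X : Polynomial F) ^ m₁ * (C a * X ^ 2 + C b * X + C c) ^ m₂ =
      C y * H ^ (q ^ m - 1)) :
    m₁ = 0 ∧ m₂ = 0 :=
  not_power_unless_trivial_general q m F a b c ha hdisc m₁ m₂ hm₁ hm₂ y H hF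
end
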